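/- arXiv:1704.07213 — 5 statements merged into one kernel-verified Lean document; each statement's English description precedes it below -/
import Mathlib

section
/- Let a_1 ≥ b_1 ≥ a_2 ≥ b_2 ≥ … ≥ a_k ≥ b_k ≥ a_{k+1} be real numbers. Then there exist complex numbers z_1, …, z_k and a real number z_{k+1} such that the (k+1)×(k+1) Hermitian matrix with diagonal entries b_1,…,b_k,z_{k+1}, last column entries \bar{z}_1,…,\bar{z}_k above z_{k+1}, last row entries z_1,…,z_k, and zeros elsewhere, has eigenvalues exactly a_1, …, a_{k+1} (with multiplicity). -/
/-
Expanding `det (X - M)` for the arrow matrix `M` along its border (a Schur complement) gives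
`(X - w) ∏ (X - bᵢ) - ∑ |zᵢ|² ∏_{j ≠ i} (X - bⱼ)`, so it suffices to write `∏ (X - aᵢ)` in this
form with `w = ∑ a - ∑ b` and all `cᵢ = |zᵢ|² ≥ 0`. When the `bᵢ` are distinct, the difference
`(X - w) ∏ (X - bᵢ) - ∏ (X - aᵢ)` has degree `< k`, so Lagrange interpolation at the nodes `bᵢ`
forces `cᵢ = -∏ⱼ (bᵢ - aⱼ) / ∏_{j ≠ i} (bᵢ - bⱼ)`, which interlacing makes nonnegative. A repeated
value `bₚ = b_q` squeezes `a_{p+1} = bₚ`; removing this pair keeps the sequences interlacing and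
divides both sides by `X - bₚ`, so the general case follows by induction on `k`.
-/

open Polynomial

/-- The Hermitian "arrow" matrix with diagonal `b 0, …, b (k-1), w`, last column
`conj (z 0), …, conj (z (k-1))`, last row `z 0, …, z (k-1)`, and zeros elsewhere. -/
noncomputable def arrowMatrix {k : ℕ} (b : Fin k → ℝ) (z : Fin k → ℂ) (w : ℝ) :
    Matrix (Fin (k + 1)) (Fin (k + 1)) ℂ := fun i j =>
  if hik : (i : ℕ) < k then
    if hjk : (j : ℕ) < k then
      if i = j then ((b ⟨(i : ℕ), hik⟩ : ℝ) : ℂ) else 0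
    else (starRingEnd ℂ) (z ⟨(i : ℕ), hik⟩)
  else
    if hjk : (j : ℕ) < k then z ⟨(j : ℕ), hjk⟩ else ((w : ℝ) : ℂ)

open Finset Lagrange Matrix

/-- The characteristic polynomial of an arrow matrix with diagonal `b, w` whose border entries
`zᵢ` have `|zᵢ|² = cᵢ`. -/
noncomputable def arrowCharpoly {R : Type*} [CommRing R] {k : ℕ} (b : Fin k → R) (w : R)
    (c : Fin k → R) : R[X] :=
  (X - C w) * nodal univ b - ∑ i, C (c i) * nodal (univ.erase i) b

theorem eval_arrowCharpoly {R : Type*} [CommRing R] {k : ℕ} (b : Fin k → R) (w : R)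
    (c : Fin k → R) (t : R) :
    (arrowCharpoly b w c).eval t =
      (t - w) * ∏ i, (t - b i) - ∑ i, c i * ∏ j ∈ univ.erase i, (t - b j) := by
  simp [arrowCharpoly, eval_nodal, eval_finsetSum]

theorem arrowCharpoly_map {R S : Type*} [CommRing R] [CommRing S] (f : R →+* S) {k : ℕ}
    (b : Fin k → R) (w : R) (c : Fin k → R) :
    (arrowCharpoly b w c).map f = arrowCharpoly (f ∘ b) (f w) (f ∘ c) := by
  simp [arrowCharpoly, nodal, Polynomial.map_prod, Polynomial.map_sum]

theorem scalar_sub_arrowMatrix_submatrix {k : ℕ} (b : Fin k → ℝ) (z : Fin k → ℂ) (w : ℝ)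
    (t : ℂ) :
    (scalar _ t - arrowMatrix b z w).submatrix finSumFinEquiv finSumFinEquiv =
      fromBlocks (diagonal fun i => t - b i) (of fun i (_ : Fin 1) => -starRingEnd ℂ (z i))
        (of fun _ j => -z j) (of fun _ _ => t - w) := by
  ext (i | i) (j | j)
  · by_cases h : i = j
    · subst h; simp [arrowMatrix]
    · simp [arrowMatrix, h]
  · simp [arrowMatrix, Fin.ext_iff, i.isLt.ne]
  · simp [arrowMatrix, Fin.ext_iff, j.isLt.ne']
  · simp [arrowMatrix, diagonal_apply, Fin.ext_iff]

theorem det_scalar_sub_arrowMatrix {k : ℕ} (b : Fin k → ℝ) (z : Fin k → ℂ) (w : ℝ) {t : ℂ}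
    (ht : ∀ i, t ≠ b i) :
    (scalar _ t - arrowMatrix b z w).det =
      (arrowCharpoly (fun i => (b i : ℂ)) w fun i => (Complex.normSq (z i) : ℂ)).eval t := by
  have hd : ∀ i, t - b i ≠ 0 := fun i => sub_ne_zero.2 (ht i)
  let := (diagonal fun i => t - b i).invertibleOfIsUnitDet
    (by simpa [det_diagonal, prod_ne_zero_iff] using hd)
  have hinv : ⅟(diagonal fun i => t - b i) = diagonal fun i => (t - b i)⁻¹ :=
    invOf_eq_right_inv (by simp [diagonal_mul_diagonal, hd])
  rw [← det_submatrix_equiv_self finSumFinEquiv, scalar_sub_arrowMatrix_submatrix,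
    det_fromBlocks₁₁, hinv, det_diagonal, det_unique, eval_arrowCharpoly]
  simp only [mul_apply, of_apply, Matrix.sub_apply, neg_mul, diagonal_apply, mul_ite, mul_zero,
    sum_ite_eq', mem_univ, if_true]
  rw [mul_sub, mul_comm, mul_sum]
  congr 1
  refine sum_congr rfl fun j _ => ?_
  rw [← mul_prod_erase univ _ (mem_univ j), Complex.normSq_eq_conj_mul_self]
  field_simp [hd j]

theorem charpoly_arrowMatrix {k : ℕ} (b : Fin k → ℝ) (z : Fin k → ℂ) (w : ℝ) :
    (arrowMatrix b z w).charpoly =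
      arrowCharpoly (fun i => (b i : ℂ)) w fun i => (Complex.normSq (z i) : ℂ) := by
  refine eq_of_infinite_eval_eq _ _ ((Set.finite_range fun i => (b i : ℂ)).infinite_compl.mono ?_)
  intro t ht
  rw [Set.mem_ofPred_eq, eval_charpoly, det_scalar_sub_arrowMatrix b z w]
  simpa [eq_comm] using ht

theorem degree_nodal_sub_nodal_lt {R : Type*} [CommRing R] [Nontrivial R] {n : ℕ}
    {u v : Fin (n + 1) → R} (h : ∑ i, u i = ∑ i, v i) :
    (nodal univ u - nodal univ v).degree < n := by
  rw [degree_lt_iff_coeff_zero]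
  intro m hm
  rcases hm.eq_or_lt with rfl | hlt
  · have hcoeff (x : Fin (n + 1) → R) : (nodal univ x).coeff n = -∑ i, x i := by
      simpa [nodal] using prod_X_sub_C_coeff_card_pred univ x (by simp)
    rw [coeff_sub, hcoeff, hcoeff, h, sub_self]
  · refine coeff_eq_zero_of_degree_lt ((degree_sub_lt_left ?_ nodal_monic.ne_zero ?_).trans_le ?_)
    · simp [degree_nodal]
    · simp [nodal_monic.leadingCoeff]
    · rw [degree_nodal, card_univ, Fintype.card_fin]
      exact_mod_cast hlt

theorem nodal_eq_mul_nodal_succAbove {R : Type*} [CommRing R] {n : ℕ} (v : Fin (n + 1) → R)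
    (i : Fin (n + 1)) : nodal univ v = (X - C (v i)) * nodal univ fun j => v (i.succAbove j) := by
  simp only [nodal, Fin.prod_univ_succAbove _ i]

theorem nodal_eq_arrowCharpoly_insertNth {R : Type*} [CommRing R] [IsDomain R] {k : ℕ}
    {a : Fin (k + 2) → R} {b : Fin (k + 1) → R} {p : Fin (k + 1)} (hp : a p.succ = b p)
    {c : Fin k → R}
    (h : nodal univ (fun i => a (p.succ.succAbove i)) =
      arrowCharpoly (fun i => b (p.succAbove i))
        (∑ i, a (p.succ.succAbove i) - ∑ i, b (p.succAbove i)) c) :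
    nodal univ a = arrowCharpoly b (∑ i, a i - ∑ i, b i) (p.insertNth 0 c) := by
  have herase (m : Fin k) : nodal (univ.erase (p.succAbove m)) b =
      (X - C (b p)) * nodal (univ.erase m) fun j => b (p.succAbove j) := by
    refine mul_left_cancel₀ (X_sub_C_ne_zero (b (p.succAbove m))) ?_
    rw [← nodal_eq_mul_nodal_erase (mem_univ _), nodal_eq_mul_nodal_succAbove b p,
      nodal_eq_mul_nodal_erase (mem_univ m)]
    ring
  have hw : ∑ i, a i - ∑ i, b i = ∑ i, a (p.succ.succAbove i) - ∑ i, b (p.succAbove i) := by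
    rw [Fin.sum_univ_succAbove a p.succ, Fin.sum_univ_succAbove b p, hp]
    ring
  have hsum : ∑ i, C ((p.insertNth 0 c : Fin (k + 1) → R) i) * nodal (univ.erase i) b =
      (X - C (b p)) * ∑ m, C (c m) * nodal (univ.erase m) fun j => b (p.succAbove j) := by
    rw [Fin.sum_univ_succAbove _ p, mul_sum]
    simp [herase, mul_left_comm]
  rw [nodal_eq_mul_nodal_succAbove a p.succ, h, hp, hw]
  unfold arrowCharpoly
  rw [nodal_eq_mul_nodal_succAbove b p, hsum]
  ring

def Interlaces {α : Type*} [LE α] {k : ℕ} (a : Fin (k + 1) → α) (b : Fin k → α) : Prop :=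
  ∀ i, b i ≤ a i.castSucc ∧ a i.succ ≤ b i

namespace Interlaces

section Preorder

variable {α : Type*} [Preorder α] {k : ℕ} {a : Fin (k + 1) → α} {b : Fin k → α}

theorem antitone_left (h : Interlaces a b) : Antitone a :=
  Fin.antitone_iff_succ_le.2 fun i => (h i).2.trans (h i).1

theorem antitone_right (h : Interlaces a b) : Antitone b := fun i j hij =>
  hij.eq_or_lt.elim (fun e => e ▸ le_rfl) fun hlt =>
    (h j).1.trans ((h.antitone_left (Fin.succ_le_castSucc_iff.2 hlt)).trans (h i).2)

theorem removeNth {a : Fin (k + 2) → α} {b : Fin (k + 1) → α} (h : Interlaces a b)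
    (p : Fin (k + 1)) :
    Interlaces (fun i => a (p.succ.succAbove i)) (fun i => b (p.succAbove i)) := by
  intro m
  refine ⟨(h _).1.trans (h.antitone_left ?_), ?_⟩
  · simp only [Fin.succAbove, Fin.le_def, Fin.lt_def, Fin.val_castSucc, Fin.val_succ]
    split_ifs <;> simp only [Fin.val_castSucc, Fin.val_succ] <;> omega
  · show a (p.succ.succAbove m.succ) ≤ b (p.succAbove m)
    rw [Fin.succ_succAbove_succ]
    exact (h _).2

end Preorder

theorem exists_succ_eq_of_not_injective {α : Type*} [PartialOrder α] {k : ℕ}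
    {a : Fin (k + 1) → α} {b : Fin k → α} (h : Interlaces a b) (hb : ¬Function.Injective b) :
    ∃ p, a p.succ = b p := by
  have hsqueeze {p q : Fin k} (hpq : p < q) (hb : b p = b q) : a p.succ = b p :=
    le_antisymm (h p).2 (hb ▸ (h q).1.trans (h.antitone_left (Fin.succ_le_castSucc_iff.2 hpq)))
  obtain ⟨p, q, hbpq, hpq⟩ := Function.not_injective_iff.1 hb
  rcases hpq.lt_or_gt with hlt | hlt
  · exact ⟨p, hsqueeze hlt hbpq⟩
  · exact ⟨q, hsqueeze hlt hbpq.symm⟩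

theorem eval_nodal_mul_eval_nodal_erase_nonpos {R : Type*} [CommRing R] [LinearOrder R]
    [IsStrictOrderedRing R] {k : ℕ} {a : Fin (k + 1) → R} {b : Fin k → R} (h : Interlaces a b)
    (i : Fin k) : (nodal univ a).eval (b i) * (nodal (univ.erase i) b).eval (b i) ≤ 0 := by
  -- For `j ≠ i`, the numbers `a j.castSucc` and `b j` lie on the same side of `b i`.
  have hpair : 0 ≤ ∏ j ∈ univ.erase i, ((b i - a j.castSucc) * (b i - b j)) := by
    refine prod_nonneg fun j hj => ?_
    rcases (ne_of_mem_erase hj).lt_or_gt with hji | hij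
    · refine mul_nonneg_of_nonpos_of_nonpos ?_ ?_
      · linarith [(h j).1, h.antitone_right hji.le]
      · linarith [h.antitone_right hji.le]
    · refine mul_nonneg ?_ ?_
      · linarith [(h i).2, h.antitone_left (Fin.succ_le_castSucc_iff.2 hij)]
      · linarith [h.antitone_right hij.le]
  have hfirst : b i - a i.castSucc ≤ 0 := by linarith [(h i).1]
  have hlast : 0 ≤ b i - a (Fin.last k) := by
    linarith [(h i).2, h.antitone_left (Fin.le_last i.succ)]
  rw [prod_mul_distrib] at hpair
  rw [eval_nodal, eval_nodal, Fin.prod_univ_castSucc, ← mul_prod_erase univ _ (mem_univ i)]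
  calc _ = (b i - a i.castSucc) * ((b i - a (Fin.last k)) *
          ((∏ j ∈ univ.erase i, (b i - a j.castSucc)) * ∏ j ∈ univ.erase i, (b i - b j))) := by
        ring
    _ ≤ 0 := mul_nonpos_of_nonpos_of_nonneg hfirst (mul_nonneg hlast hpair)

section Field

variable {K : Type*} [Field K] [LinearOrder K] [IsStrictOrderedRing K] {k : ℕ}

theorem exists_nodal_eq_arrowCharpoly_of_injective {a : Fin (k + 1) → K} {b : Fin k → K}
    (h : Interlaces a b) (hb : Function.Injective b) :
    ∃ c : Fin k → K, (∀ i, 0 ≤ c i) ∧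
      nodal univ a = arrowCharpoly b (∑ i, a i - ∑ i, b i) c := by
  set w := ∑ i, a i - ∑ i, b i
  have hR : ((X - C w) * nodal univ b - nodal univ a).degree < (k : WithBot ℕ) := by
    have hcons : (X - C w) * nodal univ b = nodal univ (Fin.cons w b : Fin (k + 1) → K) := by
      simp [nodal, Fin.prod_univ_succ]
    rw [hcons]
    exact degree_nodal_sub_nodal_lt (by simp [Fin.sum_univ_succ, w])
  refine ⟨fun i => -((nodal univ a).eval (b i) / (nodal (univ.erase i) b).eval (b i)),
    fun i => neg_nonneg.2 <| div_nonpos_iff.2 <| mul_nonpos_iff.1 <|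
      h.eval_nodal_mul_eval_nodal_erase_nonpos i, ?_⟩
  have hsum : ∑ i, C (-((nodal univ a).eval (b i) / (nodal (univ.erase i) b).eval (b i))) *
      nodal (univ.erase i) b = (X - C w) * nodal univ b - nodal univ a := by
    conv_rhs => rw [eq_interpolate (s := univ) hb.injOn (hR.trans_eq (by simp)),
      interpolate_eq_nodalWeight_mul_nodal_div_X_sub_C]
    refine sum_congr rfl fun i _ => ?_
    rw [← nodal_erase_eq_nodal_div (mem_univ i), nodalWeight_eq_eval_nodal_erase_inv]
    simp [eval_nodal_at_node]
    rw [div_eq_mul_inv, C_mul]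
    ring
  unfold arrowCharpoly
  rw [hsum, sub_sub_cancel]

theorem exists_nodal_eq_arrowCharpoly {a : Fin (k + 1) → K} {b : Fin k → K}
    (h : Interlaces a b) :
    ∃ c : Fin k → K, (∀ i, 0 ≤ c i) ∧
      nodal univ a = arrowCharpoly b (∑ i, a i - ∑ i, b i) c := by
  induction k with
  | zero => exact h.exists_nodal_eq_arrowCharpoly_of_injective fun i => i.elim0
  | succ k ih =>
    by_cases hb : Function.Injective b
    · exact h.exists_nodal_eq_arrowCharpoly_of_injective hb
    obtain ⟨p, hp⟩ := h.exists_succ_eq_of_not_injective hb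
    obtain ⟨c, hc, heq⟩ := ih (h.removeNth p)
    refine ⟨p.insertNth 0 c, fun i => ?_, nodal_eq_arrowCharpoly_insertNth hp heq⟩
    induction i using p.succAboveCases <;> simp [hc]

end Field

end Interlaces

/-- Given interlacing real numbers `a₁ ≥ b₁ ≥ a₂ ≥ … ≥ a_k ≥ b_k ≥ a_{k+1}`, there exist
complex numbers `z₁, …, z_k` and a real `z_{k+1}` such that the corresponding Hermitian
arrow matrix has eigenvalues exactly `a₁, …, a_{k+1}` with multiplicity. -/
theorem stmt4 (k : ℕ) (a : Fin (k + 1) → ℝ) (b : Fin k → ℝ)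
    (hab : ∀ i : Fin k, b i ≤ a i.castSucc ∧ a i.succ ≤ b i) :
    ∃ (z : Fin k → ℂ) (w : ℝ),
      (arrowMatrix b z w).charpoly = ∏ i : Fin (k + 1), (X - C ((a i : ℝ) : ℂ)) := by
  obtain ⟨c, hc, hnodal⟩ := Interlaces.exists_nodal_eq_arrowCharpoly (a := a) (b := b) hab
  refine ⟨fun i => (√(c i) : ℂ), ∑ i, a i - ∑ i, b i, ?_⟩
  have hnormSq (i : Fin k) : Complex.normSq (√(c i) : ℂ) = c i := by
    rw [Complex.normSq_ofReal, Real.mul_self_sqrt (hc i)]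
  calc (arrowMatrix b _ _).charpoly
      = (arrowCharpoly b (∑ i, a i - ∑ i, b i) c).map Complex.ofRealHom := by
        simp [charpoly_arrowMatrix, arrowCharpoly_map, hnormSq, Function.comp_def]
    _ = ∏ i, (X - C ((a i : ℝ) : ℂ)) := by
        simp [← hnodal, nodal, Polynomial.map_prod]
end

section
/- Let a_1 ≥ b_1 ≥ … ≥ a_k ≥ b_k ≥ a_{k+1} be real numbers and suppose that for some indices j, ℓ ≥ 1 one has b_j > a_{j+1} = b_{j+1} = … = a_{j+ℓ} = b_{j+ℓ} > a_{j+ℓ+1}. Let Z(z) be the (k+1)×(k+1) Hermitian arrow matrix with diagonal b_1,…,b_k,z_{k+1}, last column \bar{z}_1,…,\bar{z}_k and last row z_1,…,z_k. If Z(z) has eigenvalues a_1,…,a_{k+1} with multiplicity, then z_{j+1} = z_{j+2} = … = z_{j+ℓ} = 0. -/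
/-! `Z(z)` is Hermitian, so the eigenspace of `λ = a_{j+1}` has dimension equal to the
multiplicity `ℓ` of `λ` among the `a`'s. By interlacing, `λ` also occurs exactly `ℓ` times
among the `b`'s. If `z_i ≠ 0` for some `i` with `b_i = λ`, row `i` of `Z v = λ v` forces the
last coordinate of an eigenvector `v` to vanish, and then every other row forces `v_m = 0`
whenever `b_m ≠ λ`. So the eigenspace lies in the `ℓ`-dimensional span of the coordinate
vectors `e_m` with `b_m = λ`, and strictly so, because `Z e_i` has last coordinate `z_i ≠ 0`. -/

open Polynomial

open Module Module.End Matrix Finset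

theorem Polynomial.rootMultiplicity_prod_X_sub_C {R ι : Type*} [CommRing R] [IsDomain R]
    [DecidableEq R] [Fintype ι] (f : ι → R) (μ : R) :
    (∏ i, (X - C (f i))).rootMultiplicity μ = #{i | f i = μ} := by
  rw [← count_roots, roots_prod _ _ (prod_ne_zero_iff.mpr fun i _ => X_sub_C_ne_zero _)]
  simp only [roots_X_sub_C, Multiset.bind_singleton, Multiset.count_map]
  simp_rw [eq_comm (a := μ)]
  rfl

theorem LinearMap.IsSymmetric.finrank_eigenspace_eq_rootMultiplicity {𝕜 E : Type*} [RCLike 𝕜]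
    [NormedAddCommGroup E] [InnerProductSpace 𝕜 E] [FiniteDimensional 𝕜 E] {T : E →ₗ[𝕜] E}
    (hT : T.IsSymmetric) (μ : 𝕜) :
    finrank 𝕜 (eigenspace T μ) = T.charpoly.rootMultiplicity μ := by
  classical
  rw [hT.charpoly_eq rfl, rootMultiplicity_prod_X_sub_C, hT.card_filter_eigenvalues_eq]

theorem Matrix.IsHermitian.finrank_eigenspace_toEuclideanLin {𝕜 n : Type*} [RCLike 𝕜] [Fintype n]
    [DecidableEq n] {A : Matrix n n 𝕜} (hA : A.IsHermitian) (μ : 𝕜) :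
    finrank 𝕜 (eigenspace (toEuclideanLin A) μ) = A.charpoly.rootMultiplicity μ := by
  rw [(isSymmetric_toEuclideanLin_iff.mpr hA).finrank_eigenspace_eq_rootMultiplicity,
    ← charpoly_toLin' A, ← (WithLp.linearEquiv 2 𝕜 (n → 𝕜)).symm.charpoly_conj]
  rfl

theorem Module.Basis.finrank_le_card_of_repr_eq_zero {K V ι : Type*} [Field K] [AddCommGroup V]
    [Module K V] (b : Basis ι K V) {p : Submodule K V} {S : Finset ι}
    (hp : ∀ v ∈ p, ∀ i ∉ S, b.repr v i = 0) : finrank K p ≤ #S := by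
  classical
  let φ : p →ₗ[K] (S → K) := LinearMap.pi fun i => (b.coord i).comp p.subtype
  have hφ : Function.Injective φ := by
    rw [← LinearMap.ker_eq_bot, Submodule.eq_bot_iff]
    intro v hv
    have : b.repr v = 0 := Finsupp.ext fun i =>
      if hi : i ∈ S then congrFun hv ⟨i, hi⟩ else hp v v.2 i hi
    simpa using this
  simpa using LinearMap.finrank_le_finrank_of_injective hφ

theorem Module.Basis.finrank_lt_card_of_repr_eq_zero {K V ι : Type*} [Field K] [AddCommGroup V]
    [Module K V] [FiniteDimensional K V] (b : Basis ι K V) {p : Submodule K V} {S : Finset ι}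
    (hp : ∀ v ∈ p, ∀ i ∉ S, b.repr v i = 0) {y : V} (hy : ∀ i ∉ S, b.repr y i = 0)
    (hyp : y ∉ p) : finrank K p < #S :=
  calc finrank K p < finrank K ↥(p ⊔ K ∙ y) :=
        Submodule.finrank_lt_finrank_of_lt (SetLike.lt_iff_le_and_exists.mpr
          ⟨le_sup_left, y, Submodule.mem_sup_right (Submodule.mem_span_singleton_self y), hyp⟩)
    _ ≤ #S := b.finrank_le_card_of_repr_eq_zero fun v hv i hi => by
        obtain ⟨u, hu, v', hv', rfl⟩ := Submodule.mem_sup.mp hv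
        obtain ⟨c, rfl⟩ := Submodule.mem_span_singleton.mp hv'
        simp [hp u hu i hi, hy i hi]

section ArrowMatrix

variable {k : ℕ} (b : Fin k → ℝ) (z : Fin k → ℂ) (w : ℝ)

@[simp]
theorem arrowMatrix_castSucc_castSucc (i i' : Fin k) :
    arrowMatrix b z w i.castSucc i'.castSucc = if i = i' then (b i : ℂ) else 0 := by
  simp [arrowMatrix]

@[simp]
theorem arrowMatrix_castSucc_last (i : Fin k) :
    arrowMatrix b z w i.castSucc (Fin.last k) = starRingEnd ℂ (z i) := by
  simp [arrowMatrix]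

@[simp]
theorem arrowMatrix_last_castSucc (i : Fin k) :
    arrowMatrix b z w (Fin.last k) i.castSucc = z i := by
  simp [arrowMatrix]

@[simp]
theorem arrowMatrix_last_last : arrowMatrix b z w (Fin.last k) (Fin.last k) = w := by
  simp [arrowMatrix]

theorem arrowMatrix_isHermitian : (arrowMatrix b z w).IsHermitian := by
  ext i i'
  induction i using Fin.lastCases <;> induction i' using Fin.lastCases <;> simp
  split_ifs <;> simp_all [eq_comm]

theorem arrowMatrix_mulVec_castSucc (x : Fin (k + 1) → ℂ) (i : Fin k) :
    (arrowMatrix b z w *ᵥ x) i.castSucc =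
      b i * x i.castSucc + starRingEnd ℂ (z i) * x (Fin.last k) := by
  simp [mulVec, dotProduct, Fin.sum_univ_castSucc]

variable {b z w} {μ : ℝ} {x : Fin (k + 1) → ℂ}

theorem arrowMatrix_eigenvector_last_eq_zero (hx : arrowMatrix b z w *ᵥ x = (μ : ℂ) • x)
    {i₀ : Fin k} (hb : b i₀ = μ) (hz : z i₀ ≠ 0) : x (Fin.last k) = 0 := by
  have h := congrFun hx i₀.castSucc
  rw [arrowMatrix_mulVec_castSucc, hb, Pi.smul_apply, smul_eq_mul, add_eq_left] at h
  simpa [hz] using h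

theorem arrowMatrix_eigenvector_castSucc_eq_zero (hx : arrowMatrix b z w *ᵥ x = (μ : ℂ) • x)
    (hlast : x (Fin.last k) = 0) {i : Fin k} (hb : b i ≠ μ) : x i.castSucc = 0 := by
  have h := congrFun hx i.castSucc
  rw [arrowMatrix_mulVec_castSucc, hlast, mul_zero, add_zero, Pi.smul_apply, smul_eq_mul] at h
  exact (mul_eq_mul_right_iff.mp h).resolve_left (mod_cast hb)

end ArrowMatrix

theorem finrank_eigenspace_arrowMatrix_lt_card {k : ℕ} {b : Fin k → ℝ} {z : Fin k → ℂ} (w : ℝ)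
    {μ : ℝ} {i₀ : Fin k} (hb : b i₀ = μ) (hz : z i₀ ≠ 0) :
    finrank ℂ (eigenspace (toEuclideanLin (arrowMatrix b z w)) (μ : ℂ)) < #{i | b i = μ} := by
  classical
  rw [← card_map Fin.castSuccEmb]
  refine (EuclideanSpace.basisFun (Fin (k + 1)) ℂ).toBasis.finrank_lt_card_of_repr_eq_zero
    (fun v hv i hi => ?_) (y := WithLp.toLp 2 (Pi.single i₀.castSucc 1)) (fun i hi => ?_) ?_
  · have hv' : arrowMatrix b z w *ᵥ v.ofLp = (μ : ℂ) • v.ofLp := by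
      simpa using congrArg WithLp.ofLp (mem_eigenspace_iff.mp hv)
    have hlast := arrowMatrix_eigenvector_last_eq_zero hv' hb hz
    induction i using Fin.lastCases with
    | last => simpa using hlast
    | cast i =>
      simpa using arrowMatrix_eigenvector_castSucc_eq_zero hv' hlast (by simpa using hi)
  · have : i ≠ i₀.castSucc := by
      rintro rfl
      simp [hb] at hi
    simp [this]
  · intro hy
    have := congrFun (congrArg WithLp.ofLp (mem_eigenspace_iff.mp hy)) (Fin.last k)
    exact hz (by simpa using this)

theorem Fin.card_filter_eq_of_iff {n j ℓ : ℕ} {p : Fin n → Prop} [DecidablePred p]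
    (hp : ∀ i : Fin n, p i ↔ j ≤ i ∧ i < j + ℓ) (hn : j + ℓ ≤ n) : #{i | p i} = ℓ := by
  calc #{i | p i} = #((univ.filter p).map Fin.valEmbedding) := (card_map _).symm
    _ = #(Ico j (j + ℓ)) := by
      congr 1
      ext m
      simp only [mem_map, mem_filter, mem_univ, true_and, hp, Fin.valEmbedding_apply, mem_Ico]
      exact ⟨fun ⟨i, hi, him⟩ => him ▸ hi, fun hm => ⟨⟨m, by omega⟩, hm, rfl⟩⟩
    _ = ℓ := by simp

section Interlacing

variable {a b : ℕ → ℝ} {k : ℕ}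

theorem antitoneOn_of_interlacing (hab : ∀ i, 1 ≤ i → i ≤ k → b i ≤ a i ∧ a (i + 1) ≤ b i) :
    AntitoneOn a (Set.Icc 1 (k + 1)) ∧ AntitoneOn b (Set.Icc 1 k) := by
  refine ⟨antitoneOn_of_add_one_le Set.ordConnected_Icc fun i _ hi hi1 => ?_,
    antitoneOn_of_add_one_le Set.ordConnected_Icc fun i _ hi hi1 => ?_⟩
  · have := hab i hi.1 (Nat.le_of_succ_le_succ hi1.2)
    linarith
  · linarith [hab i hi.1 hi.2, hab (i + 1) hi1.1 hi1.2]

variable {j ℓ : ℕ}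

theorem upper_eq_iff_of_interlacing (hj : 1 ≤ j) (hjl : j + ℓ ≤ k)
    (hab : ∀ i, 1 ≤ i → i ≤ k → b i ≤ a i ∧ a (i + 1) ≤ b i)
    (hgt : b j > a (j + 1)) (hlt : a (j + 1) > a (j + ℓ + 1))
    (hchain : ∀ s, 1 ≤ s → s ≤ ℓ → a (j + s) = a (j + 1))
    {i : ℕ} (hi : 1 ≤ i) (hik : i ≤ k + 1) : a i = a (j + 1) ↔ j < i ∧ i ≤ j + ℓ := by
  have ha := (antitoneOn_of_interlacing hab).1
  constructor
  · intro h
    have hbj := (hab j hj (by omega)).1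
    exact ⟨ha.reflect_lt ⟨hi, hik⟩ ⟨hj, by omega⟩ (by linarith),
      Nat.lt_succ_iff.mp (ha.reflect_lt ⟨by omega, by omega⟩ ⟨hi, hik⟩ (by linarith))⟩
  · rintro ⟨hji, hij⟩
    simpa [Nat.add_sub_cancel' hji.le] using hchain (i - j) (by omega) (by omega)

theorem lower_eq_iff_of_interlacing (hj : 1 ≤ j) (hjl : j + ℓ ≤ k)
    (hab : ∀ i, 1 ≤ i → i ≤ k → b i ≤ a i ∧ a (i + 1) ≤ b i)
    (hgt : b j > a (j + 1)) (hlt : a (j + 1) > a (j + ℓ + 1))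
    (hchain : ∀ s, 1 ≤ s → s ≤ ℓ → b (j + s) = a (j + 1))
    {i : ℕ} (hi : 1 ≤ i) (hik : i ≤ k) : b i = a (j + 1) ↔ j < i ∧ i ≤ j + ℓ := by
  obtain ⟨ha, hb⟩ := antitoneOn_of_interlacing hab
  constructor
  · intro h
    have hbi := (hab i hi hik).1
    exact ⟨hb.reflect_lt ⟨hi, hik⟩ ⟨hj, by omega⟩ (by linarith),
      Nat.lt_succ_iff.mp (ha.reflect_lt ⟨by omega, by omega⟩ ⟨hi, by omega⟩ (by linarith))⟩
  · rintro ⟨hji, hij⟩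
    simpa [Nat.add_sub_cancel' hji.le] using hchain (i - j) (by omega) (by omega)

end Interlacing

/-- (1-based indexing.) If `a₁ ≥ b₁ ≥ … ≥ a_k ≥ b_k ≥ a_{k+1}` and for some `j, ℓ ≥ 1`
one has `b_j > a_{j+1} = b_{j+1} = … = a_{j+ℓ} = b_{j+ℓ} > a_{j+ℓ+1}`, then any arrow
matrix `Z(z)` with diagonal `b₁,…,b_k,w` whose eigenvalues are `a₁, …, a_{k+1}` (with
multiplicity) satisfies `z_{j+1} = … = z_{j+ℓ} = 0`. -/
theorem stmt6 (k j ℓ : ℕ) (hj : 1 ≤ j) (hjl : j + ℓ ≤ k)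
    (a b : ℕ → ℝ)
    (hab : ∀ i, 1 ≤ i → i ≤ k → b i ≤ a i ∧ a (i + 1) ≤ b i)
    (hgt : b j > a (j + 1))
    (hchain1 : ∀ s, 1 ≤ s → s ≤ ℓ → a (j + s) = a (j + 1))
    (hchain2 : ∀ s, 1 ≤ s → s ≤ ℓ → b (j + s) = a (j + 1))
    (hlt : a (j + 1) > a (j + ℓ + 1))
    (z : Fin k → ℂ) (w : ℝ)
    (hchar : (arrowMatrix (fun i : Fin k => b ((i : ℕ) + 1)) z w).charpoly =
      ∏ i : Fin (k + 1), (X - C ((a ((i : ℕ) + 1) : ℝ) : ℂ))) :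
    ∀ s, ∀ _ : 1 ≤ s, ∀ _ : s ≤ ℓ, z ⟨j + s - 1, by omega⟩ = 0 := by
  intro s hs hsℓ
  by_contra hz
  have hmult : finrank ℂ (eigenspace (toEuclideanLin
      (arrowMatrix (fun i : Fin k => b ((i : ℕ) + 1)) z w)) (a (j + 1) : ℂ)) = ℓ := by
    rw [(arrowMatrix_isHermitian _ z w).finrank_eigenspace_toEuclideanLin, hchar,
      rootMultiplicity_prod_X_sub_C]
    simp only [Complex.ofReal_inj]
    exact Fin.card_filter_eq_of_iff (j := j) (fun i =>
      (upper_eq_iff_of_interlacing hj hjl hab hgt hlt hchain1 (by omega) (by omega)).trans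
        (by omega)) (by omega)
  have hblock : #{i : Fin k | b ((i : ℕ) + 1) = a (j + 1)} = ℓ :=
    Fin.card_filter_eq_of_iff (fun i =>
      (lower_eq_iff_of_interlacing hj hjl hab hgt hlt hchain2 (by omega) (by omega)).trans
        (by omega)) hjl
  have hlt' := finrank_eigenspace_arrowMatrix_lt_card (b := fun i : Fin k => b ((i : ℕ) + 1)) w
    (i₀ := ⟨j + s - 1, by omega⟩)
    (by simpa [show j + s - 1 + 1 = j + s by omega] using hchain2 s hs hsℓ) hz
  omega
end

section
/- Fix an integer m ≥ 1. Define complex numbers y_{i,j} for 1 ≤ i, j ≤ m with i + j ≤ m + 1 by: y_{i,i} = 1; y_{i,j} = ∏_{r=0}^{j−i−1}(2i + 2r) for i < j; and y_{i,j} = ∏_{r=0}^{i−j−1}(2j + 2r)^{−1} for i > j. Then all y_{i,j} are nonzero, y_{i,j} = (y_{j,i})^{−1}, and for all (i,j) with i + j ≤ m the relation −y_{i,j+1}/y_{i,j} − y_{i−1,j}/y_{i,j} + y_{i,j}/y_{i+1,j} + y_{i,j}/y_{i,j−1} = 0 holds, where by convention terms with index 0 (i.e. y_{0,j} or y_{i,0})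 are interpreted as: y_{i−1,j}/y_{i,j} = 0 when i = 1, and y_{i,j}/y_{i,j−1} = 0 when j = 1. -/
/-!
For `i, j ≥ 1` the solution is a quotient `ySol i j = w j / w i` of the weights
`w k = 2 ^ k (k - 1)!`, since `w (k + 1) = 2k · w k`. Hence it is nonzero and inverted by
transposition, and each quotient in the relation is twice an index: the relation reads
`-2j - 2(i - 1) + 2i + 2(j - 1) = 0`.
-/

/-- The explicit candidate solution: `y i i = 1`, `y i j = ∏_{r=0}^{j-i-1} (2i + 2r)` for
`i < j`, and `y i j = (∏_{r=0}^{i-j-1} (2j + 2r))⁻¹` for `i > j` (1-based indices). -/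
noncomputable def ySol (i j : ℕ) : ℂ :=
  if i = j then 1
  else if i < j then ∏ r ∈ Finset.range (j - i), ((2 * i + 2 * r : ℕ) : ℂ)
  else (∏ r ∈ Finset.range (i - j), ((2 * j + 2 * r : ℕ) : ℂ))⁻¹

noncomputable def ySolWeight (k : ℕ) : ℂ := 2 ^ k * (k - 1).factorial

lemma ySolWeight_ne_zero (k : ℕ) : ySolWeight k ≠ 0 :=
  mul_ne_zero (pow_ne_zero _ two_ne_zero) (Nat.cast_ne_zero.2 (Nat.factorial_ne_zero _))

lemma ySolWeight_succ {k : ℕ} (hk : 1 ≤ k) :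
    ySolWeight (k + 1) = ((2 * k : ℕ) : ℂ) * ySolWeight k := by
  obtain ⟨n, rfl⟩ := Nat.exists_eq_add_of_le' hk
  simp only [ySolWeight, Nat.add_sub_cancel, Nat.factorial_succ]
  push_cast
  ring

lemma ySolWeight_mul_prod_range {i : ℕ} (hi : 1 ≤ i) (n : ℕ) :
    ySolWeight i * ∏ r ∈ Finset.range n, ((2 * i + 2 * r : ℕ) : ℂ) = ySolWeight (i + n) := by
  induction n with
  | zero => simp
  | succ n ih =>
    rw [Finset.prod_range_succ, ← mul_assoc, ih, ← add_assoc, ySolWeight_succ (by omega),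
      mul_comm]
    congr 3
    ring

lemma ySol_eq_div {i j : ℕ} (hi : 1 ≤ i) (hj : 1 ≤ j) :
    ySol i j = ySolWeight j / ySolWeight i := by
  have prod_eq {a b : ℕ} (ha : 1 ≤ a) (hab : a ≤ b) :
      ∏ r ∈ Finset.range (b - a), ((2 * a + 2 * r : ℕ) : ℂ) = ySolWeight b / ySolWeight a := by
    rw [eq_div_iff (ySolWeight_ne_zero a), mul_comm, ySolWeight_mul_prod_range ha,
      Nat.add_sub_cancel' hab]
  unfold ySol
  split_ifs with heq hlt
  · rw [heq, div_self (ySolWeight_ne_zero j)]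
  · exact prod_eq hi hlt.le
  · rw [prod_eq hj (by omega), inv_div]

lemma ySol_ne_zero {i j : ℕ} (hi : 1 ≤ i) (hj : 1 ≤ j) : ySol i j ≠ 0 := by
  rw [ySol_eq_div hi hj]
  exact div_ne_zero (ySolWeight_ne_zero j) (ySolWeight_ne_zero i)

lemma ySol_eq_inv {i j : ℕ} (hi : 1 ≤ i) (hj : 1 ≤ j) : ySol i j = (ySol j i)⁻¹ := by
  rw [ySol_eq_div hi hj, ySol_eq_div hj hi, inv_div]

lemma ySol_succ_right_div {i j : ℕ} (hi : 1 ≤ i) (hj : 1 ≤ j) :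
    ySol i (j + 1) / ySol i j = 2 * j := by
  rw [ySol_eq_div hi (by omega), ySol_eq_div hi hj, ySolWeight_succ hj,
    div_div_div_cancel_right₀ (ySolWeight_ne_zero i),
    mul_div_cancel_right₀ _ (ySolWeight_ne_zero j)]
  push_cast
  ring

lemma ySol_div_succ_left {i j : ℕ} (hi : 1 ≤ i) (hj : 1 ≤ j) :
    ySol i j / ySol (i + 1) j = 2 * i := by
  rw [ySol_eq_inv hi hj, ySol_eq_inv (by omega) hj, inv_div_inv]
  exact ySol_succ_right_div hj hi

lemma ySol_pred_left_div {i j : ℕ} (hi : 1 ≤ i) (hj : 1 ≤ j) :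
    (if i = 1 then 0 else ySol (i - 1) j / ySol i j) = 2 * ((i : ℂ) - 1) := by
  obtain ⟨k, rfl⟩ := Nat.exists_eq_add_of_le' hi
  rcases Nat.eq_zero_or_pos k with rfl | hk
  · simp
  · rw [if_neg (by omega), Nat.add_sub_cancel, ySol_div_succ_left hk hj]
    push_cast
    ring

lemma ySol_div_pred_right {i j : ℕ} (hi : 1 ≤ i) (hj : 1 ≤ j) :
    (if j = 1 then 0 else ySol i j / ySol i (j - 1)) = 2 * ((j : ℂ) - 1) := by
  obtain ⟨k, rfl⟩ := Nat.exists_eq_add_of_le' hj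
  rcases Nat.eq_zero_or_pos k with rfl | hk
  · simp
  · rw [if_neg (by omega), Nat.add_sub_cancel, ySol_succ_right_div hi hk]
    push_cast
    ring

theorem stmt9_general (m : ℕ) :
    (∀ i j, 1 ≤ i → 1 ≤ j → i + j ≤ m + 1 → ySol i j ≠ 0) ∧
    (∀ i j, 1 ≤ i → 1 ≤ j → i + j ≤ m + 1 → ySol i j = (ySol j i)⁻¹) ∧
    (∀ i j, 1 ≤ i → 1 ≤ j → i + j ≤ m →
      -(ySol i (j + 1) / ySol i j)
        - (if i = 1 then 0 else ySol (i - 1) j / ySol i j)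
        + ySol i j / ySol (i + 1) j
        + (if j = 1 then 0 else ySol i j / ySol i (j - 1)) = 0) := by
  refine ⟨fun i j hi hj _ => ySol_ne_zero hi hj, fun i j hi hj _ => ySol_eq_inv hi hj,
    fun i j hi hj _ => ?_⟩
  rw [ySol_succ_right_div hi hj, ySol_pred_left_div hi hj, ySol_div_succ_left hi hj,
    ySol_div_pred_right hi hj]
  ring

/-- For `1 ≤ i, j` with `i + j ≤ m + 1`, the numbers `ySol i j` are nonzero, satisfy
`y_{i,j} = (y_{j,i})⁻¹`, and for `i + j ≤ m` they solve the leading-term relation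
`−y_{i,j+1}/y_{i,j} − y_{i−1,j}/y_{i,j} + y_{i,j}/y_{i+1,j} + y_{i,j}/y_{i,j−1} = 0`,
where terms with an index equal to `0` are interpreted as `0`. -/
theorem stmt9 (m : ℕ) (hm : 1 ≤ m) :
    (∀ i j, 1 ≤ i → 1 ≤ j → i + j ≤ m + 1 → ySol i j ≠ 0) ∧
    (∀ i j, 1 ≤ i → 1 ≤ j → i + j ≤ m + 1 → ySol i j = (ySol j i)⁻¹) ∧
    (∀ i j, 1 ≤ i → 1 ≤ j → i + j ≤ m →
      -(ySol i (j + 1) / ySol i j)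
        - (if i = 1 then 0 else ySol (i - 1) j / ySol i j)
        + ySol i j / ySol (i + 1) j
        + (if j = 1 then 0 else ySol i j / ySol i (j - 1)) = 0) :=
  stmt9_general m
end

section
/- With notation as in the symmetric-solution construction: given nonzero complex numbers y_{i,j} for i + j ≤ m + 1 in B(m) = {1,…,m}² satisfying y_{i,j} = (y_{j,i})^{−1} and the system ∂_m(i,j)(y) = 0 for i + j ≤ m, define y_{i,j} := (−1)^{i+j−m−1} y_{m+1−j, m+1−i} for (i,j) ∈ B(m) with i + j > m + 1. Then the extended family satisfies ∂_m(i,j)(y) = 0 for all (i,j) ∈ B(m), y_{i,j}·y_{j,i} = 1 for all (i,j) ∈ B(m), and y_{i,i} = ±1 for all i. -/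
/-!
The extension rule makes `y` symmetric, up to the sign `(-1)^(i+j+m+1)`, under the
antitranspose `(i, j) ↦ (m+1-j, m+1-i)` of the whole box. Neighbouring cells carry opposite
signs, so each neighbour ratio in `∂_m(i,j)` changes sign and
`∂_m(i,j) = -∂_m(m+1-j, m+1-i)`. The antitranspose exchanges the cells above and below the
antidiagonal `i + j = m + 1` and fixes the antidiagonal itself, where the identity forces
`∂_m = 0`. Likewise `y_{i,j} y_{j,i}` is antitranspose invariant, which reduces it to the given
symmetry on the cells with `i + j ≤ m + 1`.
-/

/-- The leading-term operator `∂_m(i,j)(y)` within the box `B(m)`, with the boundary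
conventions that the terms involving `y_{0,j}` or `y_{i,m+1}` are `0` and the terms
dividing by `y_{i,0}` or `y_{m+1,j}` are `0` (1-based indices). -/
noncomputable def ltDer (m : ℕ) (y : ℕ → ℕ → ℂ) (i j : ℕ) : ℂ :=
  (if j < m then -(y i (j + 1) / y i j) else 0)
    + (if 1 < i then -(y (i - 1) j / y i j) else 0)
    + (if i < m then y i j / y (i + 1) j else 0)
    + (if 1 < j then y i j / y i (j - 1) else 0)

/-- `y i j = (-1)^(i+j+m+1) * y (m+1-j) (m+1-i)` on `B(m)`; the antitransposed indices are
passed as `i'`, `j'` with `i + i' = m + 1`, `j + j' = m + 1` to avoid truncated subtraction. -/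
def SignedAntitransposeSymm (m : ℕ) (y : ℕ → ℕ → ℂ) : Prop :=
  ∀ i j i' j', 0 < i → 0 < i' → 0 < j → 0 < j' → i + i' = m + 1 → j + j' = m + 1 →
    y i j = (-1) ^ (i + j + m + 1) * y j' i'

theorem ite_eq_neg_ite {α : Type*} [NegZeroClass α] {p q : Prop} [Decidable p] [Decidable q]
    {a b : α} (hpq : p ↔ q) (hab : p → a = -b) :
    (if p then a else 0) = -(if q then b else 0) := by
  by_cases hp : p
  · rw [if_pos hp, if_pos (hpq.mp hp), hab hp]
  · rw [if_neg hp, if_neg (hpq.not.mp hp), neg_zero]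

namespace SignedAntitransposeSymm

variable {m : ℕ} {y : ℕ → ℕ → ℂ}

theorem of_ext
    (hext : ∀ i j, 1 ≤ i → i ≤ m → 1 ≤ j → j ≤ m → m + 1 < i + j →
      y i j = (-1 : ℂ) ^ (i + j - (m + 1)) * y (m + 1 - j) (m + 1 - i)) :
    SignedAntitransposeSymm m y := by
  intro i j i' j' hi hi' hj hj' hii' hjj'
  rcases lt_trichotomy (i + j) (m + 1) with h | h | h
  · have hrefl := hext j' i' (by omega) (by omega) (by omega) (by omega) (by omega)
    rw [show m + 1 - i' = i by omega, show m + 1 - j' = j by omega] at hrefl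
    rw [hrefl, ← mul_assoc, ← pow_add, Even.neg_one_pow (by simp only [Nat.even_iff]; omega),
      one_mul]
  · obtain rfl : j' = i := by omega
    obtain rfl : i' = j := by omega
    rw [Even.neg_one_pow (by simp only [Nat.even_iff]; omega), one_mul]
  · rw [hext i j (by omega) (by omega) (by omega) (by omega) h, show m + 1 - j = j' by omega,
      show m + 1 - i = i' by omega]
    congr 1
    exact neg_one_pow_congr (by simp only [Nat.even_iff]; omega)

variable (hR : SignedAntitransposeSymm m y)
include hR

theorem div_eq_neg (i j i' j' k l k' l' : ℕ)
    (hi : 0 < i := by omega) (hi' : 0 < i' := by omega) (hj : 0 < j := by omega)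
    (hj' : 0 < j' := by omega) (hk : 0 < k := by omega) (hk' : 0 < k' := by omega)
    (hl : 0 < l := by omega) (hl' : 0 < l' := by omega)
    (hii' : i + i' = m + 1 := by omega) (hjj' : j + j' = m + 1 := by omega)
    (hkk' : k + k' = m + 1 := by omega) (hll' : l + l' = m + 1 := by omega)
    (hodd : Odd (i + j + k + l) := by simp only [Nat.odd_iff]; omega) :
    y k l / y i j = -(y l' k' / y j' i') := by
  have hsign : (-1 : ℂ) ^ (k + l + m + 1) = -(-1) ^ (i + j + m + 1) := by
    have hpar : (-1 : ℂ) ^ (k + l + m + 1) = (-1) ^ (i + j + m + 1 + 1) :=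
      neg_one_pow_congr (by simp only [Nat.even_iff]; simp only [Nat.odd_iff] at hodd; omega)
    rw [hpar, pow_succ, mul_neg_one]
  rw [hR i j i' j' hi hi' hj hj' hii' hjj', hR k l k' l' hk hk' hl hl' hkk' hll', hsign,
    neg_mul, neg_div, mul_div_mul_left _ _ (pow_ne_zero _ (neg_ne_zero.mpr one_ne_zero))]

theorem ltDer_eq_neg (i j i' j' : ℕ)
    (hi : 0 < i := by omega) (hi' : 0 < i' := by omega) (hj : 0 < j := by omega)
    (hj' : 0 < j' := by omega) (hii' : i + i' = m + 1 := by omega)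
    (hjj' : j + j' = m + 1 := by omega) :
    ltDer m y i j = -ltDer m y j' i' := by
  have e₁ : (if j < m then -(y i (j + 1) / y i j) else 0)
      = -(if 1 < j' then -(y (j' - 1) i' / y j' i') else 0) :=
    ite_eq_neg_ite (by omega) fun _ => by rw [hR.div_eq_neg i j i' j' i (j + 1) i' (j' - 1)]
  have e₂ : (if 1 < i then -(y (i - 1) j / y i j) else 0)
      = -(if i' < m then -(y j' (i' + 1) / y j' i') else 0) :=
    ite_eq_neg_ite (by omega) fun _ => by rw [hR.div_eq_neg i j i' j' (i - 1) j (i' + 1) j']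
  have e₃ : (if i < m then y i j / y (i + 1) j else 0)
      = -(if 1 < i' then y j' i' / y j' (i' - 1) else 0) :=
    ite_eq_neg_ite (by omega) fun _ => by
      rw [hR.div_eq_neg (i + 1) j (i' - 1) j' i j i' j']
  have e₄ : (if 1 < j then y i j / y i (j - 1) else 0)
      = -(if j' < m then y j' i' / y (j' + 1) i' else 0) :=
    ite_eq_neg_ite (by omega) fun _ => by
      rw [hR.div_eq_neg i (j - 1) i' (j' + 1) i j i' j']
  unfold ltDer
  linear_combination e₁ + e₂ + e₃ + e₄

theorem ltDer_eq_zero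
    (hsol : ∀ i j, 1 ≤ i → i ≤ m → 1 ≤ j → j ≤ m → i + j ≤ m → ltDer m y i j = 0) :
    ∀ i j, 1 ≤ i → i ≤ m → 1 ≤ j → j ≤ m → ltDer m y i j = 0 := by
  intro i j hi him hj hjm
  have hflip := hR.ltDer_eq_neg i j (m + 1 - i) (m + 1 - j)
  rcases lt_trichotomy (i + j) (m + 1) with h | h | h
  · exact hsol i j hi him hj hjm (by omega)
  · rw [show m + 1 - j = i by omega, show m + 1 - i = j by omega] at hflip
    linear_combination hflip / 2
  · rw [hflip, hsol _ _ (by omega) (by omega) (by omega) (by omega) (by omega), neg_zero]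

theorem mul_swap_eq (i j i' j' : ℕ)
    (hi : 0 < i := by omega) (hi' : 0 < i' := by omega) (hj : 0 < j := by omega)
    (hj' : 0 < j' := by omega) (hii' : i + i' = m + 1 := by omega)
    (hjj' : j + j' = m + 1 := by omega) :
    y i j * y j i = y j' i' * y i' j' := by
  rw [hR i j i' j' hi hi' hj hj' hii' hjj', hR j i j' i' hj hj' hi hi' hjj' hii',
    mul_mul_mul_comm, ← pow_add, Even.neg_one_pow ⟨i + j + m + 1, by omega⟩, one_mul]

theorem mul_swap_eq_one
    (hy0 : ∀ i j, 1 ≤ i → i ≤ m → 1 ≤ j → j ≤ m → i + j ≤ m + 1 → y i j ≠ 0)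
    (hsym : ∀ i j, 1 ≤ i → i ≤ m → 1 ≤ j → j ≤ m → i + j ≤ m + 1 → y i j = (y j i)⁻¹) :
    ∀ i j, 1 ≤ i → i ≤ m → 1 ≤ j → j ≤ m → y i j * y j i = 1 := by
  have hbase : ∀ i j, 1 ≤ i → i ≤ m → 1 ≤ j → j ≤ m → i + j ≤ m + 1 → y i j * y j i = 1 :=
    fun i j hi him hj hjm h => by
      rw [hsym i j hi him hj hjm h, inv_mul_cancel₀ (hy0 j i hj hjm hi him (by omega))]
  intro i j hi him hj hjm
  by_cases h : i + j ≤ m + 1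
  · exact hbase i j hi him hj hjm h
  · rw [hR.mul_swap_eq i j (m + 1 - i) (m + 1 - j)]
    exact hbase _ _ (by omega) (by omega) (by omega) (by omega) (by omega)

end SignedAntitransposeSymm

/-- Suppose the nonzero numbers `y_{i,j}` for `i + j ≤ m + 1` in `B(m)` satisfy the
symmetry `y_{i,j} = (y_{j,i})⁻¹` and `∂_m(i,j)(y) = 0` for `i + j ≤ m`, and the family is
extended by `y_{i,j} = (−1)^{i+j−m−1} · y_{m+1−j, m+1−i}` for `i + j > m + 1`. Then the
extended family satisfies `∂_m(i,j)(y) = 0` on all of `B(m)`, `y_{i,j}·y_{j,i} = 1` on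
`B(m)`, and `y_{i,i} = ±1`. -/
theorem stmt11 (m : ℕ) (y : ℕ → ℕ → ℂ)
    (hy0 : ∀ i j, 1 ≤ i → i ≤ m → 1 ≤ j → j ≤ m → i + j ≤ m + 1 → y i j ≠ 0)
    (hsym : ∀ i j, 1 ≤ i → i ≤ m → 1 ≤ j → j ≤ m → i + j ≤ m + 1 → y i j = (y j i)⁻¹)
    (hsol : ∀ i j, 1 ≤ i → i ≤ m → 1 ≤ j → j ≤ m → i + j ≤ m → ltDer m y i j = 0)
    (hext : ∀ i j, 1 ≤ i → i ≤ m → 1 ≤ j → j ≤ m → m + 1 < i + j →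
      y i j = (-1 : ℂ) ^ (i + j - (m + 1)) * y (m + 1 - j) (m + 1 - i)) :
    (∀ i j, 1 ≤ i → i ≤ m → 1 ≤ j → j ≤ m → ltDer m y i j = 0) ∧
    (∀ i j, 1 ≤ i → i ≤ m → 1 ≤ j → j ≤ m → y i j * y j i = 1) ∧
    (∀ i, 1 ≤ i → i ≤ m → y i i = 1 ∨ y i i = -1) := by
  have hR := SignedAntitransposeSymm.of_ext hext
  have hprod := hR.mul_swap_eq_one hy0 hsym
  exact ⟨hR.ltDer_eq_zero hsol, hprod,
    fun i hi him => mul_self_eq_one_iff.mp (hprod i i hi him hi him)⟩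
end

section
/- Let γ be a face of the ladder diagram Γ_λ (a subgraph of the grid graph containing all top vertices and expressible as a union of positive paths). If two L-shaped blocks L_i(a,b) and L_j(c,d) are both rigid in γ and (i,a,b) ≠ (j,c,d), then their interiors are disjoint: int L_i(a,b) ∩ int L_j(c,d) = ∅. -/
/-- The closed unit box `□^{(a,b)}` with top-right vertex `(a, b)`. -/
def unitBox (a b : ℤ) : Set (ℝ × ℝ) :=
  Set.Icc ((a : ℝ) - 1) (a : ℝ) ×ˢ Set.Icc ((b : ℝ) - 1) (b : ℝ)

/-- The `k`-th L-shaped block at `(p, q)`: the union of the boxes `□^{(p+s,q)}` and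
`□^{(p,q+s)}` for `0 ≤ s ≤ k − 1`. -/
def Lblock (k : ℕ) (p q : ℤ) : Set (ℝ × ℝ) :=
  (⋃ s ∈ Finset.range k, unitBox (p + s) q) ∪ ⋃ s ∈ Finset.range k, unitBox p (q + s)

/-- A lattice point regarded as a point of the plane. -/
def toPlane (v : ℤ × ℤ) : ℝ × ℝ := ((v.1 : ℝ), (v.2 : ℝ))

/-- The vertex set of the ladder diagram `Γ(n₁, …, n_r; n)`, where `ns 0 = 0 < ns 1 < … <
ns (r+1) = n`: the union over `j` of the lattice rectangles `[n_j, n_{j+1}] × [0, n − n_{j+1}]`. -/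
def ladderVertices (r n : ℕ) (ns : ℕ → ℕ) : Set (ℤ × ℤ) :=
  {v | ∃ j ≤ r, (ns j : ℤ) ≤ v.1 ∧ v.1 ≤ (ns (j + 1) : ℤ) ∧
    0 ≤ v.2 ∧ v.2 ≤ (n : ℤ) - (ns (j + 1) : ℤ)}

/-- A positive path: a shortest lattice path (steps `+(1,0)` or `+(0,1)`) from the origin
to a top vertex (a vertex at taxicab distance `n`), staying in the vertex set `V`. -/
def IsPositivePath (V : Set (ℤ × ℤ)) (n : ℕ) (p : ℕ → ℤ × ℤ) : Prop :=
  p 0 = (0, 0) ∧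
  (∀ s < n, p (s + 1) = p s + (1, 0) ∨ p (s + 1) = p s + (0, 1)) ∧
  (∀ s ≤ n, p s ∈ V)

/-- `(v, w)` is an edge of the face `γ` represented as a set `P` of positive paths. -/
def IsEdgeOf (P : Set (ℕ → ℤ × ℤ)) (n : ℕ) (v w : ℤ × ℤ) : Prop :=
  ∃ p ∈ P, ∃ s < n, p s = v ∧ p (s + 1) = w

/-- The L-block `L_k(p,q)` is rigid in the face represented by the set of positive paths
`P`: no edge of the face lies in the interior of the block (an edge "lies in the
interior" when its open segment is contained in the interior), and the rightmost edge
and the top edge of the block are edges of the face. -/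
def IsRigid (P : Set (ℕ → ℤ × ℤ)) (n : ℕ) (k : ℕ) (p q : ℤ) : Prop :=
  (∀ v w, IsEdgeOf P n v w →
      ¬ openSegment ℝ (toPlane v) (toPlane w) ⊆ interior (Lblock k p q)) ∧
  IsEdgeOf P n (p + k - 1, q - 1) (p + k - 1, q) ∧
  IsEdgeOf P n (p - 1, q + k - 1) (p, q + k - 1)

/-!
If `L_k(p,q)` is rigid, no edge of the face lies in the open square `Q_k(p,q)`. Indeed, the
bottom-right edge of the block lies on a positive path, so `q ≥ 1` and the origin is not a lattice
point of the open square; a positive path can only enter those lattice points through an edge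
crossing the open L, which rigidity forbids. An edge inside the open square starts either at
such a lattice point or on the left or bottom border of the square, where it again crosses the L.

If the interiors of two distinct rigid blocks met, their squares would overlap while neither
corner lies strictly north-east of the other; a short case analysis then puts the right edge or
the top edge of one block into the open square of the other.
-/

open Set Filter Topology

def openSquare (k : ℕ) (p q : ℤ) : Set (ℝ × ℝ) :=
  Ioo ((p : ℝ) - 1) (p + k - 1) ×ˢ Ioo ((q : ℝ) - 1) (q + k - 1)

lemma openSegment_toPlane_horizontal {x x' : ℤ} (y : ℤ) (h : x < x') :
    openSegment ℝ (toPlane (x, y)) (toPlane (x', y)) =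
      (fun t : ℝ => (t, (y : ℝ))) '' Ioo (x : ℝ) x' := by
  rw [← openSegment_eq_Ioo (Int.cast_lt.2 h)]
  exact (Prod.image_mk_openSegment_left _ _ _).symm

lemma openSegment_toPlane_vertical (x : ℤ) {y y' : ℤ} (h : y < y') :
    openSegment ℝ (toPlane (x, y)) (toPlane (x, y')) =
      (fun t : ℝ => ((x : ℝ), t)) '' Ioo (y : ℝ) y' := by
  rw [← openSegment_eq_Ioo (Int.cast_lt.2 h)]
  exact (Prod.image_mk_openSegment_right _ _ _).symm

section Lblock

variable {k : ℕ} {p q : ℤ}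

lemma unitBox_subset_Lblock_of_fst {x : ℤ} (h₁ : p ≤ x) (h₂ : x < p + k) :
    unitBox x q ⊆ Lblock k p q := by
  obtain ⟨s, hs⟩ := Int.eq_ofNat_of_zero_le (sub_nonneg.2 h₁)
  obtain rfl : x = p + s := by omega
  exact subset_union_of_subset_left
    (subset_biUnion_of_mem (u := fun s : ℕ => unitBox (p + s) q) (Finset.mem_range.2 (by omega))) _

lemma unitBox_subset_Lblock_of_snd {y : ℤ} (h₁ : q ≤ y) (h₂ : y < q + k) :
    unitBox p y ⊆ Lblock k p q := by
  obtain ⟨s, hs⟩ := Int.eq_ofNat_of_zero_le (sub_nonneg.2 h₁)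
  obtain rfl : y = q + s := by omega
  exact subset_union_of_subset_right
    (subset_biUnion_of_mem (u := fun s : ℕ => unitBox p (q + s)) (Finset.mem_range.2 (by omega))) _

lemma Ioo_prod_Ioo_subset_Lblock_of_fst {x : ℤ} (h₁ : p ≤ x) (h₂ : x + 2 ≤ p + k) :
    Ioo ((x : ℝ) - 1) (x + 1) ×ˢ Ioo ((q : ℝ) - 1) q ⊆ Lblock k p q := by
  rintro z ⟨⟨hx₁, hx₂⟩, hy₁, hy₂⟩
  by_cases hx : z.1 ≤ x
  · exact unitBox_subset_Lblock_of_fst h₁ (by omega) ⟨⟨hx₁.le, hx⟩, hy₁.le, hy₂.le⟩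
  · refine unitBox_subset_Lblock_of_fst (x := x + 1) (by omega) (by omega)
      ⟨?_, hy₁.le, hy₂.le⟩
    push_cast
    constructor <;> linarith

lemma Ioo_prod_Ioo_subset_Lblock_of_snd {y : ℤ} (h₁ : q ≤ y) (h₂ : y + 2 ≤ q + k) :
    Ioo ((p : ℝ) - 1) p ×ˢ Ioo ((y : ℝ) - 1) (y + 1) ⊆ Lblock k p q := by
  rintro z ⟨⟨hx₁, hx₂⟩, hy₁, hy₂⟩
  by_cases hy : z.2 ≤ y
  · exact unitBox_subset_Lblock_of_snd h₁ (by omega) ⟨⟨hx₁.le, hx₂.le⟩, hy₁.le, hy⟩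
  · refine unitBox_subset_Lblock_of_snd (y := y + 1) (by omega) (by omega)
      ⟨⟨hx₁.le, hx₂.le⟩, ?_⟩
    push_cast
    constructor <;> linarith

lemma Lblock_subset_Icc_prod_Icc :
    Lblock k p q ⊆ Icc ((p : ℝ) - 1) (p + k - 1) ×ˢ Icc ((q : ℝ) - 1) (q + k - 1) := by
  rintro z (hz | hz) <;> obtain ⟨s, hs, ⟨hx₁, hx₂⟩, hy₁, hy₂⟩ := mem_iUnion₂.1 hz <;>
    have hsk : (s : ℝ) + 1 ≤ k := by exact_mod_cast Finset.mem_range.1 hs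
  all_goals
    push_cast at hx₁ hx₂ hy₁ hy₂
    constructor <;> constructor <;> linarith [s.cast_nonneg' (α := ℝ)]

lemma Lblock_subset_fst_le_or_snd_le : Lblock k p q ⊆ {z | z.1 ≤ p ∨ z.2 ≤ q} := by
  rintro z (hz | hz) <;> obtain ⟨s, -, hx, hy⟩ := mem_iUnion₂.1 hz
  · exact Or.inr hy.2
  · exact Or.inl hx.2

lemma interior_Lblock_subset :
    interior (Lblock k p q) ⊆ openSquare k p q ∩ {z | z.1 < p ∨ z.2 < q} := by
  intro z hz
  refine ⟨?_, ?_⟩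
  · have := interior_mono Lblock_subset_Icc_prod_Icc hz
    rwa [interior_prod_eq, interior_Icc, interior_Icc] at this
  · have hdiag : Tendsto (fun t : ℝ => z + (t, t)) (𝓝[>] 0) (𝓝 z) := by
      refine tendsto_nhdsWithin_of_tendsto_nhds (Continuous.tendsto' ?_ _ _ (by simp))
      fun_prop
    obtain ⟨t, ht, ht₀⟩ :=
      ((hdiag.eventually (mem_interior_iff_mem_nhds.1 hz)).and self_mem_nhdsWithin).exists
    rcases Lblock_subset_fst_le_or_snd_le ht with h | h
    · exact Or.inl (by simp only [Prod.fst_add] at h; linarith)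
    · exact Or.inr (by simp only [Prod.snd_add] at h; linarith)

end Lblock

lemma IsPositivePath.snd_nonneg {V : Set (ℤ × ℤ)} {n : ℕ} {π : ℕ → ℤ × ℤ}
    (hπ : IsPositivePath V n π) : ∀ s ≤ n, 0 ≤ (π s).2
  | 0, _ => by simp [hπ.1]
  | s + 1, hs => by
    have := snd_nonneg hπ s (by omega)
    rcases hπ.2.1 s hs with h | h <;> rw [h, Prod.snd_add] <;> simp only <;> omega

section Rigid

variable {V : Set (ℤ × ℤ)} {P : Set (ℕ → ℤ × ℤ)} {n k : ℕ} {p q : ℤ}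

/-- The lattice points of `openSquare k p q`. -/
def squareVertices (k : ℕ) (p q : ℤ) : Set (ℤ × ℤ) :=
  {v | p ≤ v.1 ∧ v.1 + 2 ≤ p + k ∧ q ≤ v.2 ∧ v.2 + 2 ≤ q + k}

lemma IsRigid.one_le_snd (hP : ∀ π ∈ P, IsPositivePath V n π) (hr : IsRigid P n k p q) :
    1 ≤ q := by
  obtain ⟨π, hπ, s, hs, hv, -⟩ := hr.2.1
  have := (hP π hπ).snd_nonneg s hs.le
  rw [hv] at this
  omega

lemma IsRigid.le_fst_of_edge (hr : IsRigid P n k p q) {x y : ℤ}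
    (he : IsEdgeOf P n (x, y) (x + 1, y)) (hx : p ≤ x + 1) (hy₁ : q ≤ y)
    (hy₂ : y + 2 ≤ q + k) :
    p ≤ x := by
  by_contra! hxp
  refine hr.1 _ _ he ?_
  rw [openSegment_toPlane_horizontal y (lt_add_one x)]
  refine subset_trans ?_ (interior_maximal (Ioo_prod_Ioo_subset_Lblock_of_snd hy₁ hy₂)
    (isOpen_Ioo.prod isOpen_Ioo))
  rintro _ ⟨t, ⟨ht₁, ht₂⟩, rfl⟩
  obtain rfl : x = p - 1 := by omega
  push_cast at ht₁ ht₂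
  exact ⟨⟨ht₁, by linarith⟩, by linarith, by linarith⟩

lemma IsRigid.le_snd_of_edge (hr : IsRigid P n k p q) {x y : ℤ}
    (he : IsEdgeOf P n (x, y) (x, y + 1)) (hy : q ≤ y + 1) (hx₁ : p ≤ x)
    (hx₂ : x + 2 ≤ p + k) :
    q ≤ y := by
  by_contra! hyq
  refine hr.1 _ _ he ?_
  rw [openSegment_toPlane_vertical x (lt_add_one y)]
  refine subset_trans ?_ (interior_maximal (Ioo_prod_Ioo_subset_Lblock_of_fst hx₁ hx₂)
    (isOpen_Ioo.prod isOpen_Ioo))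
  rintro _ ⟨t, ⟨ht₁, ht₂⟩, rfl⟩
  obtain rfl : y = q - 1 := by omega
  push_cast at ht₁ ht₂
  exact ⟨⟨by linarith, by linarith⟩, ht₁, by linarith⟩

lemma IsRigid.not_mem_squareVertices (hP : ∀ π ∈ P, IsPositivePath V n π)
    (hr : IsRigid P n k p q) {π : ℕ → ℤ × ℤ} (hπ : π ∈ P) :
    ∀ s ≤ n, π s ∉ squareVertices k p q
  | 0, _, ⟨_, _, h, _⟩ => by
    have := hr.one_le_snd hP
    rw [(hP π hπ).1] at h
    simp only at h
    omega
  | s + 1, hs, ⟨h₁, h₂, h₃, h₄⟩ => by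
    refine hr.not_mem_squareVertices hP hπ s (by omega) ?_
    rcases hv : π s with ⟨x, y⟩
    rcases (hP π hπ).2.1 s hs with h | h <;>
      simp only [hv, Prod.mk_add_mk, add_zero] at h <;>
      rw [h] at h₁ h₂ h₃ h₄ <;> simp only at h₁ h₂ h₃ h₄
    · exact ⟨hr.le_fst_of_edge ⟨π, hπ, s, hs, hv, h⟩ h₁ h₃ h₄, by omega, h₃, h₄⟩
    · exact ⟨h₁, h₂, hr.le_snd_of_edge ⟨π, hπ, s, hs, hv, h⟩ h₃ h₁ h₂, by omega⟩

theorem IsRigid.not_openSegment_subset_openSquare (hP : ∀ π ∈ P, IsPositivePath V n π)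
    (hr : IsRigid P n k p q) {v w : ℤ × ℤ} (he : IsEdgeOf P n v w) :
    ¬ openSegment ℝ (toPlane v) (toPlane w) ⊆ openSquare k p q := by
  obtain ⟨π, hπ, s, hs, hv, hw⟩ := he
  obtain ⟨x, y⟩ := v
  intro hsub
  refine hr.not_mem_squareVertices hP hπ s hs.le (hv ▸ ?_)
  rcases (hP π hπ).2.1 s hs with h | h <;>
    simp only [hv, hw, Prod.mk_add_mk, add_zero] at h <;> subst h
  · rw [openSegment_toPlane_horizontal y (lt_add_one x)] at hsub
    obtain ⟨⟨h₁, h₂⟩, h₃, h₄⟩ := hsub ⟨x + 1 / 2, ⟨by linarith, by push_cast; linarith⟩, rfl⟩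
    have hx₁ : p - 1 < x + 1 := by rify; linarith
    have hx₂ : x < p + k - 1 := by rify; linarith
    have hy₁ : q - 1 < y := by rify; linarith
    have hy₂ : y < q + k - 1 := by rify; linarith
    exact ⟨hr.le_fst_of_edge ⟨π, hπ, s, hs, hv, hw⟩ (by omega) (by omega) (by omega), by omega,
      by omega, by omega⟩
  · rw [openSegment_toPlane_vertical x (lt_add_one y)] at hsub
    obtain ⟨⟨h₁, h₂⟩, h₃, h₄⟩ := hsub ⟨y + 1 / 2, ⟨by linarith, by push_cast; linarith⟩, rfl⟩
    have hx₁ : p - 1 < x := by rify; linarith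
    have hx₂ : x < p + k - 1 := by rify; linarith
    have hy₁ : q - 1 < y + 1 := by rify; linarith
    have hy₂ : y < q + k - 1 := by rify; linarith
    exact ⟨by omega, by omega,
      hr.le_snd_of_edge ⟨π, hπ, s, hs, hv, hw⟩ (by omega) (by omega) (by omega), by omega⟩

end Rigid

section Overlap

variable {i j : ℕ} {a b c d : ℤ}

lemma openSegment_rightEdge_subset_openSquare (h₁ : c < a + i) (h₂ : a + i < c + j)
    (h₃ : d ≤ b) (h₄ : b < d + j) :
    openSegment ℝ (toPlane (a + i - 1, b - 1)) (toPlane (a + i - 1, b)) ⊆ openSquare j c d := by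
  rw [openSegment_toPlane_vertical _ (sub_one_lt b)]
  rintro _ ⟨t, ⟨ht₁, ht₂⟩, rfl⟩
  have hx₁ : (c : ℝ) + 1 ≤ a + i := by exact_mod_cast h₁
  have hx₂ : (a : ℝ) + i + 1 ≤ c + j := by exact_mod_cast h₂
  have hy₁ : (d : ℝ) ≤ b := by exact_mod_cast h₃
  have hy₂ : (b : ℝ) + 1 ≤ d + j := by exact_mod_cast h₄
  simp only [openSquare, mem_prod, mem_Ioo]
  push_cast at ht₁ ⊢
  exact ⟨⟨by linarith, by linarith⟩, by linarith, by linarith⟩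

lemma openSegment_topEdge_subset_openSquare (h₁ : c ≤ a) (h₂ : a < c + j)
    (h₃ : d < b + i) (h₄ : b + i < d + j) :
    openSegment ℝ (toPlane (a - 1, b + i - 1)) (toPlane (a, b + i - 1)) ⊆ openSquare j c d := by
  rw [openSegment_toPlane_horizontal _ (sub_one_lt a)]
  rintro _ ⟨t, ⟨ht₁, ht₂⟩, rfl⟩
  have hx₁ : (c : ℝ) ≤ a := by exact_mod_cast h₁
  have hx₂ : (a : ℝ) + 1 ≤ c + j := by exact_mod_cast h₂
  have hy₁ : (d : ℝ) + 1 ≤ b + i := by exact_mod_cast h₃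
  have hy₂ : (b : ℝ) + i + 1 ≤ d + j := by exact_mod_cast h₄
  simp only [openSquare, mem_prod, mem_Ioo]
  push_cast at ht₁ ⊢
  exact ⟨⟨by linarith, by linarith⟩, by linarith, by linarith⟩

lemma edge_subset_openSquare_of_mem_interior (hne : (i, a, b) ≠ (j, c, d)) {z : ℝ × ℝ}
    (hzi : z ∈ interior (Lblock i a b)) (hzj : z ∈ interior (Lblock j c d)) :
    openSegment ℝ (toPlane (a + i - 1, b - 1)) (toPlane (a + i - 1, b)) ⊆ openSquare j c d ∨
    openSegment ℝ (toPlane (a - 1, b + i - 1)) (toPlane (a, b + i - 1)) ⊆ openSquare j c d ∨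
    openSegment ℝ (toPlane (c + j - 1, d - 1)) (toPlane (c + j - 1, d)) ⊆ openSquare i a b ∨
    openSegment ℝ (toPlane (c - 1, d + j - 1)) (toPlane (c, d + j - 1)) ⊆ openSquare i a b := by
  obtain ⟨⟨⟨x₁, x₂⟩, y₁, y₂⟩, hzi⟩ := interior_Lblock_subset hzi
  obtain ⟨⟨⟨u₁, u₂⟩, v₁, v₂⟩, hzj⟩ := interior_Lblock_subset hzj
  have h₁ : c < a + i := by rify; linarith
  have h₂ : a < c + j := by rify; linarith
  have h₃ : d < b + i := by rify; linarith
  have h₄ : b < d + j := by rify; linarith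
  -- neither corner lies strictly north-east of the other
  have h₅ : c ≤ a ∨ d ≤ b := by
    refine hzi.imp (fun h => ?_) (fun h => ?_)
    · have : c - 1 < a := by rify; linarith
      omega
    · have : d - 1 < b := by rify; linarith
      omega
  have h₆ : a ≤ c ∨ b ≤ d := by
    refine hzj.imp (fun h => ?_) (fun h => ?_)
    · have : a - 1 < c := by rify; linarith
      omega
    · have : b - 1 < d := by rify; linarith
      omega
  simp only [ne_eq, Prod.mk.injEq] at hne
  have hcase : (a + i < c + j ∧ d ≤ b) ∨ (c ≤ a ∧ b + i < d + j) ∨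
      (c + j < a + i ∧ b ≤ d) ∨ (a ≤ c ∧ d + j < b + i) := by
    omega
  rcases hcase with ⟨h, h'⟩ | ⟨h, h'⟩ | ⟨h, h'⟩ | ⟨h, h'⟩
  · exact Or.inl (openSegment_rightEdge_subset_openSquare h₁ h h' h₄)
  · exact Or.inr <| Or.inl (openSegment_topEdge_subset_openSquare h h₂ h₃ h')
  · exact Or.inr <| Or.inr <| Or.inl (openSegment_rightEdge_subset_openSquare h₂ h h' h₃)
  · exact Or.inr <| Or.inr <| Or.inr (openSegment_topEdge_subset_openSquare h h₁ h₄ h')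

end Overlap

theorem stmt17_general (r n : ℕ) (ns : ℕ → ℕ)
    (P : Set (ℕ → ℤ × ℤ))
    (hP : ∀ p ∈ P, IsPositivePath (ladderVertices r n ns) n p)
    (i j : ℕ) (a b c d : ℤ)
    (hri : IsRigid P n i a b) (hrj : IsRigid P n j c d)
    (hne : (i, a, b) ≠ (j, c, d)) :
    interior (Lblock i a b) ∩ interior (Lblock j c d) = ∅ := by
  refine eq_empty_iff_forall_notMem.2 fun z ⟨hzi, hzj⟩ => ?_
  rcases edge_subset_openSquare_of_mem_interior hne hzi hzj with h | h | h | h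
  · exact hrj.not_openSegment_subset_openSquare hP hri.2.1 h
  · exact hrj.not_openSegment_subset_openSquare hP hri.2.2 h
  · exact hri.not_openSegment_subset_openSquare hP hrj.2.1 h
  · exact hri.not_openSegment_subset_openSquare hP hrj.2.2 h

/-- If two different L-shaped blocks `L_i(a,b)` and `L_j(c,d)` are rigid in the same face
`γ` of the ladder diagram `Γ_λ` (a union of positive paths containing all top vertices),
then their interiors are disjoint. -/
theorem stmt17 (r n : ℕ) (ns : ℕ → ℕ)
    (hns0 : ns 0 = 0) (hnslast : ns (r + 1) = n)
    (hmono : ∀ j ≤ r, ns j < ns (j + 1))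
    (P : Set (ℕ → ℤ × ℤ)) (hPne : P.Nonempty)
    (hP : ∀ p ∈ P, IsPositivePath (ladderVertices r n ns) n p)
    (htop : ∀ v ∈ ladderVertices r n ns, v.1 + v.2 = (n : ℤ) → ∃ p ∈ P, p n = v)
    (i j : ℕ) (hi : 1 ≤ i) (hj : 1 ≤ j) (a b c d : ℤ)
    (hri : IsRigid P n i a b) (hrj : IsRigid P n j c d)
    (hne : (i, a, b) ≠ (j, c, d)) :
    interior (Lblock i a b) ∩ interior (Lblock j c d) = ∅ :=
  stmt17_general r n ns P hP i j a b c d hri hrj hne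
end
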